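/- arXiv:2001.10476 — 3 statements merged into one kernel-verified Lean document; each statement's English description precedes it below -/
import Mathlib

section
/- Let α ≥ 0, 2 + α + √(α² + (7/2)α + 3) ≤ p < 2(2+α), and s ∈ [0,1]. Then B((2+α)/p, 1−(2+α)/p) · H_{α,p}(s) ≤ ∫₀¹ ψ_{α,p}(t) K_{α,p}(s,t) dt. -/
open MeasureTheory intervalIntegral

/-- The Beta function `B(x,y) = ∫₀¹ t^(x-1) (1-t)^(y-1) dt`. -/
noncomputable def betaFn (x y : ℝ) : ℝ :=
  ∫ t in (0:ℝ)..1, t ^ (x - 1) * (1 - t) ^ (y - 1)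

/-- The incomplete Beta function `B_T(x,y) = ∫₀^T s^(x-1) (1-s)^(y-1) ds`. -/
noncomputable def betaInc (T x y : ℝ) : ℝ :=
  ∫ s in (0:ℝ)..T, s ^ (x - 1) * (1 - s) ^ (y - 1)

/-- The regularized incomplete Beta function `I_T(x,y) = B_T(x,y)/B(x,y)`. -/
noncomputable def betaReg (T x y : ℝ) : ℝ := betaInc T x y / betaFn x y

/-- Generalized binomial coefficient `binom(α,k) = α(α-1)⋯(α-k+1)/k!`. -/
noncomputable def gBinom (α : ℝ) (k : ℕ) : ℝ :=
  (∏ i ∈ Finset.range k, (α - i)) / (Nat.factorial k)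

/-- `ψ_{α,p}(t) = t^((2+α)/p - 1) (1-t)^(-(2+α)/p)`. -/
noncomputable def psiFn (α p t : ℝ) : ℝ :=
  t ^ ((2 + α) / p - 1) * (1 - t) ^ (-((2 + α) / p))

/-- `H_{α,p}(s) = Σ_k binom(α,k)(-1)^k/(p-2α-2+2k) - (1/(2(α+1)))(1-s⁴)^(α+1)`. -/
noncomputable def Hfun (α p s : ℝ) : ℝ :=
  (∑' k : ℕ, gBinom α k * (-1) ^ k / (p - 2 * α - 2 + 2 * k)) -
    1 / (2 * (α + 1)) * (1 - s ^ 4) ^ (α + 1)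

/-- `K_{α,p}(s,t) = Σ_k binom(α,k)(-1)^k max{s²,t²}^(p-2α-2+2k)/(p-2α-2+2k)`. -/
noncomputable def Kfun (α p s t : ℝ) : ℝ :=
  ∑' k : ℕ, gBinom α k * (-1) ^ k * (max (s ^ 2) (t ^ 2)) ^ (p - 2 * α - 2 + 2 * (k : ℝ)) /
    (p - 2 * α - 2 + 2 * k)

/-- Condition (C): `∫₀¹ I_t((2+α)/p, 1-(2+α)/p) t^(2p-4α-5)(1-t⁴)^α dt - 1/(4(α+1)) ≤ 0`. -/
noncomputable def condC (α p : ℝ) : Prop :=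
  (∫ t in (0:ℝ)..1,
      betaReg t ((2 + α) / p) (1 - (2 + α) / p) * t ^ (2 * p - 4 * α - 5) * (1 - t ^ 4) ^ α)
    - 1 / (4 * (α + 1)) ≤ 0

/-- Lebesgue area measure on `ℂ` normalized so that the unit disk has measure 1. -/
noncomputable def normalizedArea : Measure ℂ := (ENNReal.ofReal Real.pi)⁻¹ • volume

/-- The (p-th power of the) weighted Bergman norm:
`‖f‖_{A^p_α} = ((α+1) ∫_𝔻 |f(w)|^p (1-|w|²)^α dA(w))^(1/p)`. -/
noncomputable def bergmanNorm (α p : ℝ) (f : ℂ → ℂ) : ℝ :=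
  ((α + 1) * ∫ w in Metric.ball (0 : ℂ) 1,
      ‖f w‖ ^ p * (1 - ‖w‖ ^ 2) ^ α ∂normalizedArea) ^ (1 / p)

/-- Membership in the weighted Bergman space `A^p_α`: `f` is analytic on the unit disk and has
finite Bergman norm (the defining integrand is integrable). -/
def MemBergman (α p : ℝ) (f : ℂ → ℂ) : Prop :=
  DifferentiableOn ℂ f (Metric.ball (0 : ℂ) 1) ∧
  IntegrableOn (fun w => ‖f w‖ ^ p * (1 - ‖w‖ ^ 2) ^ α)
    (Metric.ball (0 : ℂ) 1) normalizedArea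

/-- The Hilbert matrix operator `ℋ(f)(z) = ∫₀¹ f(t/((t-1)z+1)) / ((t-1)z+1) dt`. -/
noncomputable def hilbertOp (f : ℂ → ℂ) (z : ℂ) : ℂ :=
  ∫ t in (0:ℝ)..1, f ((t : ℂ) / (((t : ℂ) - 1) * z + 1)) / (((t : ℂ) - 1) * z + 1)

/-- The operator norm of the Hilbert matrix operator on `A^p_α`:
`sup { ‖ℋ f‖_{A^p_α} : f ∈ A^p_α, ‖f‖_{A^p_α} ≤ 1 }`. -/
noncomputable def hilbertOpNorm (α p : ℝ) : ℝ :=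
  sSup {c : ℝ | ∃ f : ℂ → ℂ, MemBergman α p f ∧ bergmanNorm α p f ≤ 1 ∧
    c = bergmanNorm α p (hilbertOp f)}

/-!
Put `q = p - 2α - 2`, `W(m) = betaWeightIntegral α q m = ∫₀^m x^(q-1) (1 - x²)^α dx`,
`P(y) = ∫₀^y ψ` and `B = P(1)`.
Integrating the binomial series of `(1 - x²)^α` termwise gives `K(s,t) = W(max(s,t)²)` and
`H(s) = W(1) - (1 - s⁴)^(α+1) / (2(α+1))`.

With `c = 4 - 2q`, the hypotheses on `p` say exactly `0 < c ≤ (2+α)/p`, which gives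
`ψ(s v) ≤ s^(c-1) ψ(v)`; the substitution `t = s v` turns this into `P(y) ≤ B y^c`.
This bound makes
`Δ(y) = P(y) W(y²) + ∫_y^1 ψ(t) W(t²) dt + B (1 - y⁴)^(α+1) / (2(α+1))`
antitone on `[0,1]`, and `Δ(1) ≤ Δ(s)` is the claim.
-/

open Real Set

lemma gBinom_eq_choose (α : ℝ) (k : ℕ) : gBinom α k = Ring.choose α k := by
  rw [Ring.choose_eq_smul, ← Polynomial.aeval_eq_smeval, Polynomial.aeval_def,
    Polynomial.eval₂_eq_eval_map, descPochhammer_map, descPochhammer_eval_eq_prod_range, gBinom,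
    smul_eq_mul, inv_mul_eq_div]

lemma hasSum_gBinom_mul_pow (α : ℝ) {y : ℝ} (hy : |y| < 1) :
    HasSum (fun k => gBinom α k * y ^ k) ((1 + y) ^ α) := by
  have := (one_add_rpow_hasFPowerSeriesOnBall_zero (a := α)).hasSum (y := y)
    (by simpa [← ofReal_norm] using hy)
  simpa [gBinom_eq_choose, binomialSeries, FormalMultilinearSeries.coeff_ofScalars, mul_comm]
    using this

lemma gBinom_succ (α : ℝ) (k : ℕ) : gBinom α (k + 1) = (α - k) / (k + 1) * gBinom α k := by
  simp only [gBinom, Finset.prod_range_succ, Nat.factorial_succ]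
  push_cast
  field_simp

lemma abs_gBinom_succ_mul_le {α : ℝ} (hα : 0 ≤ α) {k : ℕ} (hk : α ≤ k) :
    |gBinom α (k + 1)| * (k + 2) ≤ |gBinom α k| * (k + 1) := by
  rw [gBinom_succ, abs_mul, abs_div, abs_of_nonpos (sub_nonpos.2 hk), abs_of_pos (by positivity)]
  have hk0 : (0 : ℝ) ≤ k := k.cast_nonneg
  have key : (k - α) * (k + 2) ≤ ((k : ℝ) + 1) ^ 2 := by nlinarith
  rw [div_mul_eq_mul_div, div_mul_eq_mul_div, div_le_iff₀ (by positivity)]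
  nlinarith [abs_nonneg (gBinom α k)]

lemma exists_abs_gBinom_mul_le {α : ℝ} (hα : 0 ≤ α) :
    ∃ C, ∀ k : ℕ, |gBinom α k| * (k + 1) ≤ C := by
  set N := ⌈α⌉₊
  refine ⟨∑ j ∈ Finset.range (N + 1), |gBinom α j| * (j + 1), fun k => ?_⟩
  have hle : ∀ j ≤ N,
      |gBinom α j| * (j + 1) ≤ ∑ j ∈ Finset.range (N + 1), |gBinom α j| * (j + 1) :=
    fun j hj => Finset.single_le_sum (f := fun j : ℕ => |gBinom α j| * (j + 1))
      (fun j _ => by positivity) (Finset.mem_range_succ_iff.2 hj)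
  rcases le_total k N with hk | hk
  · exact hle k hk
  induction k, hk using Nat.le_induction with
  | base => exact hle N le_rfl
  | succ k hk ih =>
    have := abs_gBinom_succ_mul_le hα ((Nat.le_ceil α).trans (Nat.cast_le.2 hk))
    push_cast
    linarith

lemma summable_abs_gBinom_mul_rpow_div {α q m : ℝ} (hα : 0 ≤ α) (hq : 1 ≤ q) (hm0 : 0 ≤ m)
    (hm1 : m ≤ 1) :
    Summable fun k : ℕ => |gBinom α k| * (m ^ (q + 2 * (k : ℝ)) / (q + 2 * k)) := by
  obtain ⟨C, hC⟩ := exists_abs_gBinom_mul_le hα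
  refine Summable.of_nonneg_of_le (fun k => by positivity) (fun k => ?_)
    (((summable_nat_add_iff 1).2 (summable_one_div_nat_pow.2 one_lt_two)).mul_left C)
  have hk : (k : ℝ) + 1 ≤ q + 2 * k := by linarith [k.cast_nonneg (α := ℝ)]
  have hmk : m ^ (q + 2 * (k : ℝ)) ≤ 1 := rpow_le_one hm0 hm1 (by linarith)
  push_cast
  calc |gBinom α k| * (m ^ (q + 2 * (k : ℝ)) / (q + 2 * k))
      ≤ |gBinom α k| * (1 / (k + 1)) := by gcongr
    _ ≤ C / (k + 1) * (1 / (k + 1)) := by gcongr; rw [le_div_iff₀ (by positivity)]; exact hC k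
    _ = C * (1 / (k + 1) ^ 2) := by field_simp

noncomputable def betaWeight (α q x : ℝ) : ℝ := x ^ (q - 1) * (1 - x ^ 2) ^ α

noncomputable def betaWeightIntegral (α q m : ℝ) : ℝ := ∫ x in (0:ℝ)..m, betaWeight α q x

lemma continuous_betaWeight {α q : ℝ} (hα : 0 ≤ α) (hq : 1 ≤ q) :
    Continuous (betaWeight α q) :=
  (continuous_id.rpow_const fun _ => Or.inr (by linarith)).mul
    ((continuous_const.sub (continuous_pow 2)).rpow_const fun _ => Or.inr hα)

lemma hasDerivAt_betaWeightIntegral {α q : ℝ} (hα : 0 ≤ α) (hq : 1 ≤ q) (m : ℝ) :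
    HasDerivAt (betaWeightIntegral α q) (betaWeight α q m) m :=
  ((continuous_betaWeight hα hq).integral_hasStrictDerivAt 0 m).hasDerivAt

lemma continuous_betaWeightIntegral {α q : ℝ} (hα : 0 ≤ α) (hq : 1 ≤ q) :
    Continuous (betaWeightIntegral α q) :=
  continuous_iff_continuousAt.2 fun m => (hasDerivAt_betaWeightIntegral hα hq m).continuousAt

lemma integral_Ioo_rpow {m r : ℝ} (hm : 0 ≤ m) (hr : 0 ≤ r) :
    ∫ x in Ioo 0 m, x ^ r = m ^ (r + 1) / (r + 1) := by
  rw [← integral_Ioc_eq_integral_Ioo, ← intervalIntegral.integral_of_le hm,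
    integral_rpow (Or.inl (by linarith)), zero_rpow (by linarith), sub_zero]

/-- Termwise integration is justified even at `m = 1`: `|binom(α,k)| = O(1/k)` makes the
integrals of the absolute values of the terms `O(1/k²)`. -/
lemma hasSum_betaWeightIntegral {α q m : ℝ} (hα : 0 ≤ α) (hq : 1 ≤ q) (hm0 : 0 ≤ m)
    (hm1 : m ≤ 1) :
    HasSum (fun k : ℕ => gBinom α k * (-1) ^ k * m ^ (q + 2 * (k : ℝ)) / (q + 2 * k))
      (betaWeightIntegral α q m) := by
  set F : ℕ → ℝ → ℝ := fun k x => gBinom α k * (-1) ^ k * x ^ (q - 1 + 2 * (k : ℝ))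
  have hexp : ∀ k : ℕ, 0 ≤ q - 1 + 2 * (k : ℝ) := fun k => by positivity
  have hexp1 : ∀ k : ℕ, q - 1 + 2 * (k : ℝ) + 1 = q + 2 * k := fun k => by ring
  have hint : ∀ k, ∫ x in Ioo 0 m, F k x
      = gBinom α k * (-1) ^ k * m ^ (q + 2 * (k : ℝ)) / (q + 2 * k) := fun k => by
    rw [MeasureTheory.integral_const_mul, integral_Ioo_rpow hm0 (hexp k), hexp1, mul_div_assoc]
  have hnorm : ∀ k, ∫ x in Ioo 0 m, ‖F k x‖
      = |gBinom α k| * (m ^ (q + 2 * (k : ℝ)) / (q + 2 * k)) := fun k => by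
    rw [← hexp1, ← integral_Ioo_rpow hm0 (hexp k), ← MeasureTheory.integral_const_mul]
    refine setIntegral_congr_fun measurableSet_Ioo fun x hx => ?_
    simp [F, abs_rpow_of_nonneg hx.1.le, abs_of_pos hx.1]
  have hF_int : ∀ k, Integrable (F k) (volume.restrict (Ioo 0 m)) := fun k =>
    (((continuous_id.rpow_const fun _ => Or.inr (hexp k)).const_mul _).integrableOn_Icc
      (a := 0) (b := m)).mono_set Ioo_subset_Icc_self
  have hF_sum : Summable fun k => ∫ x in Ioo 0 m, ‖F k x‖ := by
    simpa only [hnorm] using summable_abs_gBinom_mul_rpow_div hα hq hm0 hm1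
  have hpoint : ∀ x ∈ Ioo 0 m, HasSum (fun k => F k x) (betaWeight α q x) := by
    intro x hx
    have hterm : ∀ k : ℕ, F k x = x ^ (q - 1) * (gBinom α k * (-x ^ 2) ^ k) := fun k => by
      simp only [F]
      rw [rpow_add hx.1, show 2 * (k : ℝ) = ((2 * k : ℕ) : ℝ) by push_cast; ring, rpow_natCast,
        pow_mul, neg_pow]
      ring
    have hx2 : |-x ^ 2| < 1 := by
      rw [abs_neg, abs_of_nonneg (sq_nonneg x)]
      nlinarith [hx.1, hx.2.trans_le hm1]
    simpa only [betaWeight, hterm, ← sub_eq_add_neg] using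
      (hasSum_gBinom_mul_pow α hx2).mul_left (x ^ (q - 1))
  have := hasSum_integral_of_summable_integral_norm hF_int hF_sum
  rw [setIntegral_congr_fun measurableSet_Ioo fun x hx => (hpoint x hx).tsum_eq] at this
  rw [betaWeightIntegral, intervalIntegral.integral_of_le hm0, integral_Ioc_eq_integral_Ioo]
  simpa only [hint] using this

lemma Hfun_eq {α p : ℝ} (hα : 0 ≤ α) (hq : 1 ≤ p - 2 * α - 2) (s : ℝ) :
    Hfun α p s = betaWeightIntegral α (p - 2 * α - 2) 1
      - 1 / (2 * (α + 1)) * (1 - s ^ 4) ^ (α + 1) := by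
  simp only [Hfun, ← (hasSum_betaWeightIntegral hα hq zero_le_one le_rfl).tsum_eq, one_rpow,
    mul_one]

lemma Kfun_eq {α p s t : ℝ} (hα : 0 ≤ α) (hq : 1 ≤ p - 2 * α - 2) (hs : s ∈ Icc (0:ℝ) 1)
    (ht : t ∈ Icc (0:ℝ) 1) :
    Kfun α p s t = betaWeightIntegral α (p - 2 * α - 2) (max s t ^ 2) := by
  have hmax : max (s ^ 2) (t ^ 2) = max s t ^ 2 := by
    rcases le_total s t with h | h
    · rw [max_eq_right h, max_eq_right (pow_le_pow_left₀ hs.1 h 2)]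
    · rw [max_eq_left h, max_eq_left (pow_le_pow_left₀ ht.1 h 2)]
  rw [Kfun, hmax]
  exact (hasSum_betaWeightIntegral hα hq (sq_nonneg _)
    (pow_le_one₀ (le_max_of_le_left hs.1) (max_le hs.2 ht.2))).tsum_eq

lemma intervalIntegrable_rpow_mul_one_sub_rpow {a b : ℝ} (ha : -1 < a) (hb : -1 < b) :
    IntervalIntegrable (fun t => t ^ a * (1 - t) ^ b) volume 0 1 := by
  have hleft : IntervalIntegrable (fun t => t ^ a * (1 - t) ^ b) volume 0 (1 / 2) :=
    (intervalIntegral.intervalIntegrable_rpow' ha).mul_continuousOn fun t ht => by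
      rw [uIcc_of_le (by norm_num)] at ht
      exact ((continuousAt_const.sub continuousAt_id :
        ContinuousAt (fun t : ℝ => 1 - t) t).rpow_const
          (Or.inl (by linarith [ht.2] : (0:ℝ) < 1 - t).ne')).continuousWithinAt
  have hright : IntervalIntegrable (fun t => t ^ a * (1 - t) ^ b) volume (1 / 2) 1 := by
    have h := (intervalIntegral.intervalIntegrable_rpow' hb (a := 1 / 2) (b := 0)).comp_sub_left 1
    norm_num at h
    refine h.continuousOn_mul fun t ht => ?_
    rw [uIcc_of_le (by norm_num)] at ht
    exact (continuousAt_rpow_const t a (Or.inl (by linarith [ht.1]))).continuousWithinAt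
  exact hleft.trans hright

lemma intervalIntegrable_psiFn {α p : ℝ} (ha0 : 0 < (2 + α) / p) (ha1 : (2 + α) / p < 1) :
    IntervalIntegrable (psiFn α p) volume 0 1 :=
  intervalIntegrable_rpow_mul_one_sub_rpow (by linarith) (by linarith)

lemma betaFn_eq_integral_psiFn (α p : ℝ) :
    betaFn ((2 + α) / p) (1 - (2 + α) / p) = ∫ t in (0:ℝ)..1, psiFn α p t := by
  simp only [betaFn, psiFn, sub_sub_cancel_left]

lemma continuousOn_psiFn (α p : ℝ) : ContinuousOn (psiFn α p) (Ioo 0 1) := fun t ht =>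
  ((continuousAt_rpow_const t _ (Or.inl ht.1.ne')).mul
    ((continuousAt_const.sub continuousAt_id : ContinuousAt (fun t : ℝ => 1 - t) t).rpow_const
      (Or.inl (sub_ne_zero.2 ht.2.ne')))).continuousWithinAt

lemma psiFn_mul_le {α p c s v : ℝ} (hs0 : 0 < s) (hs1 : s ≤ 1) (hv : v ∈ Ioo (0:ℝ) 1)
    (ha0 : 0 ≤ (2 + α) / p) (hca : c ≤ (2 + α) / p) :
    psiFn α p (s * v) ≤ s ^ (c - 1) * psiFn α p v := by
  have hsv : s * v ≤ v := mul_le_of_le_one_left hv.1.le hs1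
  have hsv1 : 0 ≤ 1 - s * v := by linarith [hv.2]
  have hv0 := hv.1
  rw [psiFn, psiFn, mul_rpow hs0.le hv.1.le, mul_assoc]
  refine mul_le_mul (rpow_le_rpow_of_exponent_ge hs0 hs1 (by linarith)) ?_ (by positivity)
    (by positivity)
  exact mul_le_mul_of_nonneg_left
    (rpow_le_rpow_of_nonpos (by linarith [hv.2]) (by linarith) (by linarith)) (by positivity)

lemma integral_le_rpow_mul_integral_of_scaling {f : ℝ → ℝ} {c s : ℝ} (hs0 : 0 < s)
    (hs1 : s ≤ 1) (hf : IntervalIntegrable f volume 0 1)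
    (hscale : ∀ v ∈ Ioo (0:ℝ) 1, f (s * v) ≤ s ^ (c - 1) * f v) :
    ∫ t in (0:ℝ)..s, f t ≤ s ^ c * ∫ t in (0:ℝ)..1, f t := by
  have hfs : IntervalIntegrable (fun v => f (s * v)) volume 0 1 := by
    have hsub : uIcc 0 s ⊆ uIcc (0:ℝ) 1 := by
      rw [uIcc_of_le zero_le_one, uIcc_of_le hs0.le]
      exact Icc_subset_Icc_right hs1
    have h := (hf.mono_set hsub).comp_mul_left (c := s)
    rwa [zero_div, div_self hs0.ne'] at h
  calc ∫ t in (0:ℝ)..s, f t = s * ∫ v in (0:ℝ)..1, f (s * v) := by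
        rw [intervalIntegral.integral_comp_mul_left _ hs0.ne', mul_zero, mul_one, smul_eq_mul,
          mul_inv_cancel_left₀ hs0.ne']
    _ ≤ s * ∫ v in (0:ℝ)..1, s ^ (c - 1) * f v := by
      gcongr
      exact intervalIntegral.integral_mono_on_of_le_Ioo zero_le_one hfs (hf.const_mul _) hscale
    _ = s ^ c * ∫ t in (0:ℝ)..1, f t := by
      rw [intervalIntegral.integral_const_mul, ← mul_assoc, rpow_sub_one hs0.ne',
        mul_div_cancel₀ _ hs0.ne']

lemma integral_psiFn_le_rpow_mul {α p c s : ℝ} (ha0 : 0 < (2 + α) / p)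
    (ha1 : (2 + α) / p < 1) (hc0 : 0 < c) (hca : c ≤ (2 + α) / p) (hs : s ∈ Icc (0:ℝ) 1) :
    ∫ t in (0:ℝ)..s, psiFn α p t ≤ s ^ c * ∫ t in (0:ℝ)..1, psiFn α p t := by
  rcases hs.1.eq_or_lt with rfl | hs0
  · simp [zero_rpow hc0.ne']
  exact integral_le_rpow_mul_integral_of_scaling hs0 hs.2 (intervalIntegrable_psiFn ha0 ha1)
    fun v hv => psiFn_mul_le hs0 hs.2 hv ha0.le hca

section Primitive

variable {f V : ℝ → ℝ}

lemma intervalIntegrable_mul_of_continuousOn_Icc (hf : IntervalIntegrable f volume 0 1)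
    (hV : ContinuousOn V (Icc 0 1)) {x y : ℝ} (hx : x ∈ Icc (0:ℝ) 1) (hy : y ∈ Icc (0:ℝ) 1) :
    IntervalIntegrable (fun t => f t * V t) volume x y := by
  have hsub : uIcc x y ⊆ uIcc 0 1 := uIcc_subset_uIcc (by rwa [uIcc_of_le zero_le_one])
    (by rwa [uIcc_of_le zero_le_one])
  exact (hf.mono_set hsub).mul_continuousOn (hV.mono (hsub.trans (uIcc_of_le zero_le_one).le))

lemma continuousOn_primitive_mul_add_integral (hf : IntervalIntegrable f volume 0 1)
    (hV : ContinuousOn V (Icc 0 1)) :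
    ContinuousOn (fun y => (∫ t in (0:ℝ)..y, f t) * V y + ∫ t in y..1, f t * V t)
      (Icc 0 1) := by
  have hfV := intervalIntegrable_mul_of_continuousOn_Icc hf hV (left_mem_Icc.2 zero_le_one)
    (right_mem_Icc.2 zero_le_one)
  rw [intervalIntegrable_iff', uIcc_of_le zero_le_one] at hf hfV
  have h1 := intervalIntegral.continuousOn_primitive_interval (μ := volume) (a := 0) (b := 1)
    (f := f) (by rwa [uIcc_of_le zero_le_one])
  have h2 := intervalIntegral.continuousOn_primitive_interval_left (μ := volume) (a := 0) (b := 1)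
    (by rwa [uIcc_of_le zero_le_one])
  rw [uIcc_of_le zero_le_one] at h1 h2
  exact (h1.mul hV).add h2

lemma hasDerivAt_primitive_mul_add_integral (hf : IntervalIntegrable f volume 0 1)
    (hfc : ContinuousOn f (Ioo 0 1)) (hV : ContinuousOn V (Icc 0 1)) {y v : ℝ}
    (hy : y ∈ Ioo (0:ℝ) 1) (hVy : HasDerivAt V v y) :
    HasDerivAt (fun y => (∫ t in (0:ℝ)..y, f t) * V y + ∫ t in y..1, f t * V t)
      ((∫ t in (0:ℝ)..y, f t) * v) y := by
  have hfVc : ContinuousOn (fun t => f t * V t) (Ioo 0 1) :=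
    hfc.mul (hV.mono Ioo_subset_Icc_self)
  have hP : HasDerivAt (fun y => ∫ t in (0:ℝ)..y, f t) (f y) y :=
    intervalIntegral.integral_hasDerivAt_right
      (hf.mono_set (uIcc_subset_uIcc left_mem_uIcc
        (by rw [uIcc_of_le zero_le_one]; exact Ioo_subset_Icc_self hy)))
      (hfc.stronglyMeasurableAtFilter isOpen_Ioo y hy)
      (hfc.continuousAt (isOpen_Ioo.mem_nhds hy))
  have hT : HasDerivAt (fun y => ∫ t in y..1, f t * V t) (-(f y * V y)) y :=
    intervalIntegral.integral_hasDerivAt_left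
      (intervalIntegrable_mul_of_continuousOn_Icc hf hV (Ioo_subset_Icc_self hy)
        (right_mem_Icc.2 zero_le_one))
      (hfVc.stronglyMeasurableAtFilter isOpen_Ioo y hy)
      (hfVc.continuousAt (isOpen_Ioo.mem_nhds hy))
  exact ((hP.mul hVy).add hT).congr_deriv (by ring)

lemma integral_mul_comp_max (hf : IntervalIntegrable f volume 0 1)
    (hV : ContinuousOn V (Icc 0 1)) {s : ℝ} (hs : s ∈ Icc (0:ℝ) 1) :
    ∫ t in (0:ℝ)..1, f t * V (max s t)
      = (∫ t in (0:ℝ)..s, f t) * V s + ∫ t in s..1, f t * V t := by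
  have hVmax : ContinuousOn (fun t => V (max s t)) (Icc 0 1) :=
    hV.comp (continuous_const.max continuous_id).continuousOn fun t ht =>
      ⟨le_max_of_le_left hs.1, max_le hs.2 ht.2⟩
  rw [← intervalIntegral.integral_add_adjacent_intervals
    (intervalIntegrable_mul_of_continuousOn_Icc hf hVmax (left_mem_Icc.2 zero_le_one) hs)
    (intervalIntegrable_mul_of_continuousOn_Icc hf hVmax hs (right_mem_Icc.2 zero_le_one)),
    ← intervalIntegral.integral_mul_const]
  congr 1
  · refine intervalIntegral.integral_congr fun t ht => ?_
    rw [uIcc_of_le hs.1] at ht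
    simp only [max_eq_left ht.2]
  · refine intervalIntegral.integral_congr fun t ht => ?_
    rw [uIcc_of_le hs.2] at ht
    simp only [max_eq_right ht.1]

end Primitive

lemma mul_betaWeight_sq_le {α q B X y : ℝ} (hy0 : 0 < y) (hy1 : y ≤ 1)
    (hX : X ≤ B * y ^ (4 - 2 * q)) :
    X * betaWeight α q (y ^ 2) ≤ B * y ^ 2 * (1 - y ^ 4) ^ α := by
  have hy4 : 0 ≤ 1 - y ^ 4 := by nlinarith [pow_le_one₀ hy0.le hy1 (n := 4)]
  have hw : betaWeight α q (y ^ 2) = y ^ (2 * q - 2) * (1 - y ^ 4) ^ α := by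
    rw [betaWeight, show 1 - (y ^ 2) ^ 2 = 1 - y ^ 4 by ring, ← rpow_natCast y 2,
      ← rpow_mul hy0.le]
    congr 2
    push_cast
    ring
  have hexp : y ^ (4 - 2 * q) * y ^ (2 * q - 2) = y ^ 2 := by
    rw [← rpow_add hy0, ← rpow_natCast]
    ring_nf
  rw [hw]
  calc X * (y ^ (2 * q - 2) * (1 - y ^ 4) ^ α)
      ≤ B * y ^ (4 - 2 * q) * (y ^ (2 * q - 2) * (1 - y ^ 4) ^ α) := by gcongr
    _ = B * y ^ 2 * (1 - y ^ 4) ^ α := by rw [← hexp]; ring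

lemma hasDerivAt_one_sub_pow_four_rpow {α : ℝ} (hα : 0 ≤ α) (y : ℝ) :
    HasDerivAt (fun y : ℝ => 1 / (2 * (α + 1)) * (1 - y ^ 4) ^ (α + 1))
      (-(2 * y ^ 3 * (1 - y ^ 4) ^ α)) y := by
  have h := ((hasDerivAt_pow 4 y).const_sub 1).rpow_const (p := α + 1) (Or.inr (by linarith))
  refine (h.const_mul (1 / (2 * (α + 1)))).congr_deriv ?_
  rw [add_sub_cancel_right]
  field_simp
  push_cast
  ring

lemma integral_psiFn_mul_sub_le_integral_mul {α p q s : ℝ} (hα : 0 ≤ α) (hq : 1 ≤ q)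
    (ha0 : 0 < (2 + α) / p) (ha1 : (2 + α) / p < 1) (hc0 : 0 < 4 - 2 * q)
    (hca : 4 - 2 * q ≤ (2 + α) / p) (hs : s ∈ Icc (0:ℝ) 1) :
    (∫ t in (0:ℝ)..1, psiFn α p t) *
        (betaWeightIntegral α q 1 - 1 / (2 * (α + 1)) * (1 - s ^ 4) ^ (α + 1))
      ≤ ∫ t in (0:ℝ)..1, psiFn α p t * betaWeightIntegral α q (max s t ^ 2) := by
  set B := ∫ t in (0:ℝ)..1, psiFn α p t
  set V : ℝ → ℝ := fun y => betaWeightIntegral α q (y ^ 2)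
  set E : ℝ → ℝ := fun y => 1 / (2 * (α + 1)) * (1 - y ^ 4) ^ (α + 1)
  have hψ := intervalIntegrable_psiFn ha0 ha1
  have hV : ContinuousOn V (Icc 0 1) :=
    ((continuous_betaWeightIntegral hα hq).comp (continuous_pow 2)).continuousOn
  -- `Δ' y = 2 y (1 - y⁴)^α (P y y^(2q-2) - B y²)`
  have hanti : AntitoneOn (fun y =>
      ((∫ t in (0:ℝ)..y, psiFn α p t) * V y + ∫ t in y..1, psiFn α p t * V t) + B * E y)
      (Icc 0 1) := by
    refine antitoneOn_of_hasDerivWithinAt_nonpos (convex_Icc 0 1)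
      ((continuousOn_primitive_mul_add_integral hψ hV).add
        (continuousOn_const.mul fun y _ =>
          (hasDerivAt_one_sub_pow_four_rpow hα y).continuousAt.continuousWithinAt))
      (f' := fun y => (∫ t in (0:ℝ)..y, psiFn α p t) * (betaWeight α q (y ^ 2) * (2 * y))
        + B * (-(2 * y ^ 3 * (1 - y ^ 4) ^ α))) (fun y hy => ?_) (fun y hy => ?_) <;>
      rw [interior_Icc] at hy
    · have hVy : HasDerivAt V (betaWeight α q (y ^ 2) * (2 * y)) y := by
        refine ((hasDerivAt_betaWeightIntegral hα hq (y ^ 2)).comp y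
          (hasDerivAt_pow 2 y)).congr_deriv ?_
        simp
      exact ((hasDerivAt_primitive_mul_add_integral hψ (continuousOn_psiFn α p) hV hy hVy).add
        ((hasDerivAt_one_sub_pow_four_rpow hα y).const_mul B)).hasDerivWithinAt
    · have hP : ∫ t in (0:ℝ)..y, psiFn α p t ≤ y ^ (4 - 2 * q) * B :=
        integral_psiFn_le_rpow_mul ha0 ha1 hc0 hca (Ioo_subset_Icc_self hy)
      have := mul_betaWeight_sq_le (α := α) hy.1 hy.2.le (hP.trans_eq (mul_comm _ _))
      nlinarith [hy.1]
  have h := hanti hs (right_mem_Icc.2 zero_le_one) hs.2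
  simp only [V, E, one_pow, intervalIntegral.integral_same, sub_self,
    zero_rpow (by linarith : α + 1 ≠ 0), mul_zero, add_zero] at h
  rw [integral_mul_comp_max hψ hV hs]
  linarith

/-- The lower bound on `p` is equivalent to `2p² - 4(2 + α)p + (2 + α) ≥ 0`. -/
lemma four_sub_two_mul_le_div {α p : ℝ} (hα : 0 ≤ α)
    (hp : 2 + α + √(α ^ 2 + (7 / 2) * α + 3) ≤ p) :
    4 - 2 * (p - 2 * α - 2) ≤ (2 + α) / p := by
  have hr := sq_sqrt (by positivity : 0 ≤ α ^ 2 + (7 / 2) * α + 3)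
  have hr0 := sqrt_nonneg (α ^ 2 + (7 / 2) * α + 3)
  rw [le_div_iff₀ (by nlinarith)]
  nlinarith

theorem key_lemma_large_p (α p s : ℝ) (hα : 0 ≤ α)
    (hp1 : 2 + α + Real.sqrt (α ^ 2 + (7 / 2) * α + 3) ≤ p) (hp2 : p < 2 * (2 + α))
    (hs : s ∈ Set.Icc (0:ℝ) 1) :
    betaFn ((2 + α) / p) (1 - (2 + α) / p) * Hfun α p s
      ≤ ∫ t in (0:ℝ)..1, psiFn α p t * Kfun α p s t := by
  have hr : α + 1 ≤ √(α ^ 2 + (7 / 2) * α + 3) := le_sqrt_of_sq_le (by nlinarith)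
  have hq : 1 ≤ p - 2 * α - 2 := by linarith
  have hp0 : 0 < p := by linarith
  rw [betaFn_eq_integral_psiFn, Hfun_eq hα hq]
  calc _ ≤ ∫ t in (0:ℝ)..1, psiFn α p t * betaWeightIntegral α (p - 2 * α - 2) (max s t ^ 2) :=
        integral_psiFn_mul_sub_le_integral_mul hα hq (by positivity)
          ((div_lt_one hp0).2 (by linarith)) (by linarith) (four_sub_two_mul_le_div hα hp1) hs
    _ = ∫ t in (0:ℝ)..1, psiFn α p t * Kfun α p s t := by
        refine intervalIntegral.integral_congr fun t ht => ?_
        rw [uIcc_of_le zero_le_one] at ht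
        rw [Kfun_eq hα hq hs ht]
end

section
/- Let x, y ∈ (0,1]. Then B(x,y) ≥ 1/x + 1/y − 1 and B(x,y) ≤ (1/(xy)) · (x+y)/(1+xy). -/
open MeasureTheory intervalIntegral

/-!
For `0 < x, y ≤ 1` both `t ^ (x - 1)` and `(1 - t) ^ (y - 1)` are at least `1` on `(0, 1)`, so
`t ^ (x - 1) * (1 - t) ^ (y - 1) ≥ t ^ (x - 1) + (1 - t) ^ (y - 1) - 1`; integrating gives the
lower bound.

For the upper bound, Euler's limit formula for `Γ` and `B(x, y) = Γ(x) Γ(y) / Γ(x + y)` give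
`x y / (x + y) * B(x, y) = ∏_{j ≥ 1} j (x + y + j) / ((x + j) (y + j))`. The `n`-th partial product
is at most `(1 + x y / (n + 1)) / (1 + x y)`: with `m = n + 1`, the inductive step is
`(m + 1 + x y) (m + x) (m + y) - (m + x y) (m + x + y) (m + 1) = x y (1 - x) (1 - y) ≥ 0`.
Letting `n → ∞` gives `x y / (x + y) * B(x, y) ≤ 1 / (1 + x y)`.
-/

open Filter Finset Topology
open scoped Nat

lemma ofReal_rpow_mul_one_sub_rpow {t : ℝ} (ht : t ∈ Set.Icc (0 : ℝ) 1) (x y : ℝ) :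
    ((t ^ (x - 1) * (1 - t) ^ (y - 1) : ℝ) : ℂ) =
      (t : ℂ) ^ ((x : ℂ) - 1) * (1 - (t : ℂ)) ^ ((y : ℂ) - 1) := by
  push_cast
  rw [Complex.ofReal_cpow ht.1, Complex.ofReal_cpow (sub_nonneg.2 ht.2)]
  push_cast
  rfl

lemma ofReal_betaFn (x y : ℝ) : (betaFn x y : ℂ) = Complex.betaIntegral x y := by
  rw [betaFn, ← intervalIntegral.integral_ofReal]
  refine integral_congr fun t ht ↦ ?_
  rw [Set.uIcc_of_le zero_le_one] at ht
  exact ofReal_rpow_mul_one_sub_rpow ht x y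

lemma betaFn_eq_beta {x y : ℝ} (hx : 0 < x) (hy : 0 < y) :
    betaFn x y = ProbabilityTheory.beta x y := by
  rw [ProbabilityTheory.beta_eq_betaIntegralReal x y hx hy, ← ofReal_betaFn, Complex.ofReal_re]

lemma intervalIntegrable_rpow_mul_one_sub_rpow_s10 {x y : ℝ} (hx : 0 < x) (hy : 0 < y) :
    IntervalIntegrable (fun t : ℝ ↦ t ^ (x - 1) * (1 - t) ^ (y - 1)) volume 0 1 := by
  have hc := Complex.betaIntegral_convergent (u := x) (v := y) (by simpa) (by simpa)
  rw [intervalIntegrable_iff_integrableOn_Ioc_of_le zero_le_one] at hc ⊢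
  refine IntegrableOn.congr_fun hc.re (fun t ht ↦ ?_) measurableSet_Ioc
  rw [← ofReal_rpow_mul_one_sub_rpow (Set.Ioc_subset_Icc_self ht), RCLike.re_to_complex,
    Complex.ofReal_re]

lemma integral_rpow_sub_one {a : ℝ} (ha : 0 < a) : ∫ t in (0 : ℝ)..1, t ^ (a - 1) = 1 / a := by
  rw [integral_rpow (Or.inl (by linarith)), sub_add_cancel, Real.one_rpow, Real.zero_rpow ha.ne']
  ring

lemma integral_one_sub_rpow_sub_one {a : ℝ} (ha : 0 < a) :
    ∫ t in (0 : ℝ)..1, (1 - t) ^ (a - 1) = 1 / a := by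
  simpa using (integral_comp_sub_left (fun t : ℝ ↦ t ^ (a - 1)) (1 : ℝ)).trans
    (by simpa using integral_rpow_sub_one ha)

lemma one_div_add_one_div_sub_one_le_betaFn {x y : ℝ} (hx0 : 0 < x) (hx1 : x ≤ 1)
    (hy0 : 0 < y) (hy1 : y ≤ 1) : 1 / x + 1 / y - 1 ≤ betaFn x y := by
  have hI1 : IntervalIntegrable (fun t : ℝ ↦ t ^ (x - 1)) volume 0 1 :=
    intervalIntegrable_rpow' (by linarith)
  have hI2 : IntervalIntegrable (fun t : ℝ ↦ (1 - t) ^ (y - 1)) volume 0 1 := by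
    simpa using ((intervalIntegrable_rpow' (a := 0) (b := 1) (r := y - 1)
      (by linarith)).comp_sub_left 1).symm
  have hle : ∀ t ∈ Set.Ioo (0 : ℝ) 1,
      t ^ (x - 1) + (1 - t) ^ (y - 1) - 1 ≤ t ^ (x - 1) * (1 - t) ^ (y - 1) := by
    intro t ⟨ht0, ht1⟩
    have ha : 1 ≤ t ^ (x - 1) :=
      Real.one_le_rpow_of_pos_of_le_one_of_nonpos ht0 ht1.le (by linarith)
    have hb : 1 ≤ (1 - t) ^ (y - 1) :=
      Real.one_le_rpow_of_pos_of_le_one_of_nonpos (by linarith) (by linarith) (by linarith)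
    nlinarith [mul_nonneg (sub_nonneg.2 ha) (sub_nonneg.2 hb)]
  have := integral_mono_on_of_le_Ioo zero_le_one ((hI1.add hI2).sub intervalIntegrable_const)
    (intervalIntegrable_rpow_mul_one_sub_rpow_s10 hx0 hy0) hle
  rwa [integral_sub (hI1.add hI2) intervalIntegrable_const, integral_add hI1 hI2,
    integral_rpow_sub_one hx0, integral_one_sub_rpow_sub_one hy0,
    intervalIntegral.integral_const, smul_eq_mul, sub_zero, mul_one] at this

noncomputable def betaEulerProd (x y : ℝ) (n : ℕ) : ℝ :=
  ∏ j ∈ range n, (j + 1) * (x + y + j + 1) / ((x + j + 1) * (y + j + 1))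

lemma prod_range_succ_add_natCast (s : ℝ) (n : ℕ) :
    ∏ j ∈ range (n + 1), (s + j) = (∏ j ∈ range n, (s + j + 1)) * s := by
  rw [prod_range_succ']
  push_cast
  simp only [add_zero, add_assoc]

lemma Real.GammaSeq_pos {s : ℝ} (hs : 0 < s) {n : ℕ} (hn : n ≠ 0) : 0 < GammaSeq s n := by
  unfold Real.GammaSeq
  have : (0 : ℝ) < n := by positivity
  exact div_pos (by positivity) (prod_pos fun j _ ↦ by positivity)

lemma mul_GammaSeq_mul_GammaSeq {x y : ℝ} (hx : 0 < x) (hy : 0 < y) (n : ℕ) :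
    x * y * (Real.GammaSeq x n * Real.GammaSeq y n) =
      (x + y) * Real.GammaSeq (x + y) n * betaEulerProd x y n := by
  have hpos : ∀ s : ℝ, 0 < s → 0 < ∏ j ∈ range n, (s + j + 1) :=
    fun s hs ↦ prod_pos fun j _ ↦ by positivity
  have hfac : ((n ! : ℕ) : ℝ) = ∏ j ∈ range n, ((j : ℝ) + 1) := by
    rw [← prod_range_add_one_eq_factorial]
    push_cast
    rfl
  simp only [Real.GammaSeq, betaEulerProd, prod_range_succ_add_natCast, prod_div_distrib,
    prod_mul_distrib, hfac, Real.rpow_add' n.cast_nonneg (add_pos hx hy).ne']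
  have := hpos x hx
  have := hpos y hy
  have := hpos (x + y) (add_pos hx hy)
  field_simp

lemma tendsto_betaEulerProd {x y : ℝ} (hx : 0 < x) (hy : 0 < y) :
    Tendsto (betaEulerProd x y) atTop (𝓝 (x * y / (x + y) * betaFn x y)) := by
  have hxy := add_pos hx hy
  have hlim := (((Real.GammaSeq_tendsto_Gamma x).mul (Real.GammaSeq_tendsto_Gamma y)).const_mul
    (x * y)).div ((Real.GammaSeq_tendsto_Gamma (x + y)).const_mul (x + y))
    (mul_pos hxy (Real.Gamma_pos_of_pos hxy)).ne'
  rw [betaFn_eq_beta hx hy, ProbabilityTheory.beta]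
  convert hlim.congr' ?_ using 2
  · field_simp
  · filter_upwards [eventually_ne_atTop 0] with n hn
    rw [Pi.div_apply, mul_GammaSeq_mul_GammaSeq hx hy n,
      mul_div_cancel_left₀ _ (mul_pos hxy (Real.GammaSeq_pos hxy hn)).ne']

lemma one_add_div_mul_div_le {x y m : ℝ} (hx0 : 0 ≤ x) (hx1 : x ≤ 1) (hy0 : 0 ≤ y) (hy1 : y ≤ 1)
    (hm : 0 < m) :
    (1 + x * y / m) * (m * (x + y + m) / ((x + m) * (y + m))) ≤ 1 + x * y / (m + 1) := by
  have hcubic : (m + x * y) * (m + x + y) * (m + 1) ≤ (m + 1 + x * y) * ((m + x) * (m + y)) := by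
    nlinarith [mul_nonneg (mul_nonneg hx0 hy0) (mul_nonneg (sub_nonneg.2 hx1) (sub_nonneg.2 hy1))]
  calc (1 + x * y / m) * (m * (x + y + m) / ((x + m) * (y + m)))
      = (m + x * y) * (m + x + y) / ((m + x) * (m + y)) := by
        field_simp
        ring
    _ ≤ (m + 1 + x * y) / (m + 1) := by
        rwa [div_le_div_iff₀ (by positivity) (by positivity)]
    _ = 1 + x * y / (m + 1) := by
        field_simp

lemma betaEulerProd_mul_le {x y : ℝ} (hx0 : 0 ≤ x) (hx1 : x ≤ 1) (hy0 : 0 ≤ y) (hy1 : y ≤ 1)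
    (n : ℕ) : betaEulerProd x y n * (1 + x * y) ≤ 1 + x * y / (n + 1) := by
  induction n with
  | zero => simp [betaEulerProd]
  | succ n ih =>
    rw [betaEulerProd, prod_range_succ, ← betaEulerProd]
    push_cast
    calc _ = betaEulerProd x y n * (1 + x * y) *
          ((n + 1) * (x + y + (n + 1)) / ((x + (n + 1)) * (y + (n + 1)))) := by ring
      _ ≤ (1 + x * y / (n + 1)) *
          ((n + 1) * (x + y + (n + 1)) / ((x + (n + 1)) * (y + (n + 1)))) :=
        mul_le_mul_of_nonneg_right ih (by positivity)
      _ ≤ 1 + x * y / (n + 1 + 1) := one_add_div_mul_div_le hx0 hx1 hy0 hy1 (by positivity)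

lemma betaFn_mul_le {x y : ℝ} (hx0 : 0 < x) (hx1 : x ≤ 1) (hy0 : 0 < y) (hy1 : y ≤ 1) :
    betaFn x y * (x * y * (1 + x * y)) ≤ x + y := by
  have hbound : x * y / (x + y) * betaFn x y * (1 + x * y) ≤ 1 := by
    refine le_of_tendsto_of_tendsto' ((tendsto_betaEulerProd hx0 hy0).mul_const _) ?_
      (betaEulerProd_mul_le hx0.le hx1 hy0.le hy1)
    simpa [div_eq_mul_inv] using
      tendsto_one_div_add_atTop_nhds_zero_nat.const_mul (x * y) |>.const_add 1
  rw [div_mul_eq_mul_div, div_mul_eq_mul_div, div_le_one (by positivity)] at hbound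
  linarith

theorem beta_bounds_reversed (x y : ℝ) (hx0 : 0 < x) (hx1 : x ≤ 1)
    (hy0 : 0 < y) (hy1 : y ≤ 1) :
    1 / x + 1 / y - 1 ≤ betaFn x y ∧
    betaFn x y ≤ 1 / (x * y) * ((x + y) / (1 + x * y)) := by
  refine ⟨one_div_add_one_div_sub_one_le_betaFn hx0 hx1 hy0 hy1, ?_⟩
  rw [one_div_mul_eq_div, div_div, le_div_iff₀ (by positivity), mul_comm (1 + x * y)]
  exact betaFn_mul_le hx0 hx1 hy0 hy1
end

section
/- Let α = 1 and 4 < p ≤ 5.1. Then condition (C) fails, i.e., ∫₀¹ I_t(3/p, 1−3/p) t^{2p−9}(1−t⁴) dt − 1/8 > 0. -/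
open MeasureTheory intervalIntegral

/-!
Put `a = 3 / p ∈ [1/2, 3/4)`. The reflection formula gives `B(a, 1 - a) = π / sin (π a)`, and
`(1 - s)^(-a) ≥ (1 - s)^(-1/2)` dominates the first four terms of the binomial series of the
latter, so `B_t(a, 1 - a) ≥ Σ_{k<4} c_k t^(a+k) / (a + k)`. Integrating against
`t^(2p-9) (1 - t⁴)` bounds the integral from below by `sin (π a) / π` times an explicit
rational function of `a` and `p`, which is decreasing in both. On each of four subintervals of
`(4, 5.1]` we evaluate it at the worst endpoints and bound the sine by
`sin (π a) ≥ 1 - π² (a - 1/2)² / 2`; what remains are four rational inequalities.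
-/

open Real Set

lemma ofReal_betaIntegrand {x y s : ℝ} (hs0 : 0 ≤ s) (hs1 : s ≤ 1) :
    ((s ^ (x - 1) * (1 - s) ^ (y - 1) : ℝ) : ℂ) =
      (s : ℂ) ^ ((x : ℂ) - 1) * (1 - (s : ℂ)) ^ ((y : ℂ) - 1) := by
  rw [Complex.ofReal_mul, Complex.ofReal_cpow hs0, Complex.ofReal_cpow (by linarith)]
  push_cast
  rfl

lemma betaIntegral_ofReal (x y : ℝ) : Complex.betaIntegral x y = betaFn x y := by
  rw [Complex.betaIntegral, betaFn, ← integral_ofReal]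
  refine integral_congr fun s hs => ?_
  rw [uIcc_of_le zero_le_one] at hs
  exact (ofReal_betaIntegrand hs.1 hs.2).symm

lemma intervalIntegrable_betaIntegrand {x y : ℝ} (hx : 0 < x) (hy : 0 < y) :
    IntervalIntegrable (fun s : ℝ => s ^ (x - 1) * (1 - s) ^ (y - 1)) volume 0 1 := by
  have hC := (Complex.betaIntegral_convergent (u := x) (v := y) (by simpa) (by simpa)).norm
  refine hC.congr ?_
  rw [uIoc_of_le zero_le_one]
  intro s hs
  dsimp only
  rw [← ofReal_betaIntegrand hs.1.le hs.2, Complex.norm_real, Real.norm_of_nonneg]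
  exact mul_nonneg (rpow_nonneg hs.1.le _) (rpow_nonneg (by linarith [hs.2]) _)

lemma betaFn_eq_Gamma_mul_Gamma_div {x y : ℝ} (hx : 0 < x) (hy : 0 < y) :
    betaFn x y = Gamma x * Gamma y / Gamma (x + y) := by
  have h := Complex.Gamma_mul_Gamma_eq_betaIntegral (s := x) (t := y) (by simpa) (by simpa)
  rw [betaIntegral_ofReal, ← Complex.ofReal_add, Complex.Gamma_ofReal, Complex.Gamma_ofReal,
    Complex.Gamma_ofReal, ← Complex.ofReal_mul, ← Complex.ofReal_mul] at h
  rw [Complex.ofReal_injective h, mul_div_cancel_left₀ _ (Gamma_pos_of_pos (by linarith)).ne']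

lemma betaFn_one_sub {x : ℝ} (hx0 : 0 < x) (hx1 : x < 1) :
    betaFn x (1 - x) = π / sin (π * x) := by
  rw [betaFn_eq_Gamma_mul_Gamma_div hx0 (by linarith), add_sub_cancel, Gamma_one, div_one,
    Gamma_mul_Gamma_one_sub]

/-- The Taylor coefficients of `(1 - s)^(-1/2)`. -/
noncomputable def invSqrtCoeff (k : ℕ) : ℝ := Nat.centralBinom k / 4 ^ k

lemma sum_invSqrtCoeff_mul_pow_le_one_sub_rpow_neg {b s : ℝ} (hb : 1 / 2 ≤ b) (hs0 : 0 ≤ s)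
    (hs1 : s < 1) : ∑ k ∈ Finset.range 4, invSqrtCoeff k * s ^ k ≤ (1 - s) ^ (-b) := by
  set q := ∑ k ∈ Finset.range 4, invSqrtCoeff k * s ^ k
  have hq : q = 1 + s / 2 + 3 * s ^ 2 / 8 + 5 * s ^ 3 / 16 := by
    simp only [q, Finset.sum_range_succ, Finset.sum_range_zero, invSqrtCoeff]
    norm_num [Nat.centralBinom, Nat.choose]
    ring
  have h1s : 0 < 1 - s := by linarith
  have hq_sq : (q * √(1 - s)) ^ 2 ≤ 1 := by
    rw [mul_pow, sq_sqrt h1s.le, hq]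
    nlinarith [pow_nonneg hs0 4, pow_nonneg hs0 5, pow_nonneg hs0 6, pow_nonneg hs0 7]
  have hq_half : q ≤ (1 - s) ^ (-(1 / 2) : ℝ) := by
    rw [rpow_neg h1s.le, ← sqrt_eq_rpow, ← one_div, le_div_iff₀ (sqrt_pos.mpr h1s)]
    have hq0 : 0 ≤ q := by rw [hq]; positivity
    exact (pow_le_one_iff_of_nonneg (by positivity) two_ne_zero).mp hq_sq
  exact hq_half.trans (rpow_le_rpow_of_exponent_ge h1s (by linarith) (by linarith))

lemma integral_rpow_zero_left {t e : ℝ} (he : -1 < e) :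
    ∫ s in (0 : ℝ)..t, s ^ e = t ^ (e + 1) / (e + 1) := by
  rw [integral_rpow (Or.inl he), zero_rpow (by linarith), sub_zero]

lemma sum_invSqrtCoeff_le_betaInc {x y t : ℝ} (hx : 0 < x) (hy : y ≤ 1 / 2) (ht0 : 0 ≤ t)
    (ht1 : t < 1) :
    ∑ k ∈ Finset.range 4, invSqrtCoeff k * (t ^ (x + k) / (x + k)) ≤ betaInc t x y := by
  have hexp (k : ℕ) : -1 < x - 1 + k := by linarith [k.cast_nonneg (α := ℝ)]
  have hint (k : ℕ) : IntervalIntegrable (fun s : ℝ => invSqrtCoeff k * s ^ (x - 1 + k))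
      volume 0 t := (intervalIntegrable_rpow' (hexp k)).const_mul _
  have hsum : ∑ k ∈ Finset.range 4, invSqrtCoeff k * (t ^ (x + k) / (x + k)) =
      ∫ s in (0 : ℝ)..t, ∑ k ∈ Finset.range 4, invSqrtCoeff k * s ^ (x - 1 + k) := by
    rw [integral_finsetSum fun k _ => hint k]
    refine Finset.sum_congr rfl fun k _ => ?_
    rw [intervalIntegral.integral_const_mul, integral_rpow_zero_left (hexp k),
      show x - 1 + k + 1 = x + k by ring]
  have hbeta : IntervalIntegrable (fun s : ℝ => s ^ (x - 1) * (1 - s) ^ (y - 1)) volume 0 t := by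
    refine (intervalIntegrable_rpow' (by linarith)).mul_continuousOn ?_
    refine ContinuousOn.rpow_const (f := fun s => 1 - s) (by fun_prop) fun s hs => Or.inl ?_
    rw [uIcc_of_le ht0] at hs
    linarith [hs.2]
  rw [hsum, betaInc]
  refine integral_mono_on_of_le_Ioo ht0
    (by simpa only [Finset.sum_fn] using IntervalIntegrable.sum _ fun k _ => hint k)
    hbeta fun s hs => ?_
  calc ∑ k ∈ Finset.range 4, invSqrtCoeff k * s ^ (x - 1 + k)
      = s ^ (x - 1) * ∑ k ∈ Finset.range 4, invSqrtCoeff k * s ^ k := by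
        simp only [rpow_add_natCast hs.1.ne', Finset.mul_sum]
        exact Finset.sum_congr rfl fun k _ => by ring
    _ ≤ s ^ (x - 1) * (1 - s) ^ (y - 1) := by
        rw [show y - 1 = -(1 - y) by ring]
        exact mul_le_mul_of_nonneg_left
          (sum_invSqrtCoeff_mul_pow_le_one_sub_rpow_neg (by linarith) hs.1.le (hs.2.trans ht1))
          (rpow_nonneg hs.1.le _)

lemma betaReg_one_sub {t x : ℝ} (hx0 : 0 < x) (hx1 : x < 1) :
    betaReg t x (1 - x) = sin (π * x) / π * betaInc t x (1 - x) := by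
  rw [betaReg, betaFn_one_sub hx0 hx1, div_div_eq_mul_div, mul_div_assoc, mul_comm]

lemma continuousOn_betaReg {x y : ℝ} (hx : 0 < x) (hy : 0 < y) :
    ContinuousOn (fun t => betaReg t x y) (uIcc 0 1) :=
  (continuousOn_primitive_interval'
    (intervalIntegrable_betaIntegrand hx hy) left_mem_uIcc).div_const _

lemma integral_rpow_mul_one_sub_pow_four {e : ℝ} (he : -1 < e) :
    ∫ t in (0 : ℝ)..1, t ^ e * (1 - t ^ 4) = 4 / ((e + 1) * (e + 5)) := by
  have he4 : -1 < e + (4 : ℕ) := by push_cast; linarith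
  have hsplit : ∀ t ∈ uIcc (0 : ℝ) 1, t ^ e * (1 - t ^ 4) = t ^ e - t ^ (e + (4 : ℕ)) := by
    intro t ht
    rw [uIcc_of_le zero_le_one] at ht
    rw [rpow_add_natCast' ht.1 (by push_cast; linarith)]
    ring
  rw [integral_congr hsplit,
    integral_sub (intervalIntegrable_rpow' he) (intervalIntegrable_rpow' he4),
    integral_rpow_zero_left he, integral_rpow_zero_left he4, one_rpow, one_rpow,
    show e + (4 : ℕ) + 1 = e + 5 by push_cast; ring, div_sub_div _ _ (by linarith) (by linarith)]
  ring

/-- `∫₀¹ t^b (1 - t⁴) Σₖ cₖ t^(x+k)/(x+k) dt`, with `cₖ = invSqrtCoeff k`. -/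
noncomputable def taylorLowerSum (x b : ℝ) : ℝ :=
  ∑ k ∈ Finset.range 4, invSqrtCoeff k / (x + k) * (4 / ((b + x + k + 1) * (b + x + k + 5)))

lemma sin_div_pi_mul_taylorLowerSum_le_integral {x b : ℝ} (hx1 : 1 / 2 ≤ x) (hx2 : x < 1)
    (hb : -1 < b) :
    sin (π * x) / π * taylorLowerSum x b ≤
      ∫ t in (0 : ℝ)..1, betaReg t x (1 - x) * t ^ b * (1 - t ^ 4) := by
  have hx0 : 0 < x := by linarith
  have hσ : 0 ≤ sin (π * x) / π :=
    div_nonneg (sin_nonneg_of_nonneg_of_le_pi (by positivity) (by nlinarith [pi_pos])) pi_pos.le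
  set d : ℕ → ℝ := fun k => sin (π * x) / π * (invSqrtCoeff k / (x + k))
  have hexp (k : ℕ) : -1 < b + (x + k) := by linarith [k.cast_nonneg (α := ℝ)]
  have hint (k : ℕ) : IntervalIntegrable (fun t : ℝ => d k * (t ^ (b + (x + k)) * (1 - t ^ 4)))
      volume 0 1 :=
    ((intervalIntegrable_rpow' (hexp k)).mul_continuousOn (by fun_prop)).const_mul _
  have hsum : sin (π * x) / π * taylorLowerSum x b =
      ∫ t in (0 : ℝ)..1, ∑ k ∈ Finset.range 4, d k * (t ^ (b + (x + k)) * (1 - t ^ 4)) := by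
    rw [integral_finsetSum fun k _ => hint k, taylorLowerSum, Finset.mul_sum]
    refine Finset.sum_congr rfl fun k _ => ?_
    rw [intervalIntegral.integral_const_mul, integral_rpow_mul_one_sub_pow_four (hexp k)]
    simp only [d, ← add_assoc, mul_assoc]
  have hupper : IntervalIntegrable (fun t => betaReg t x (1 - x) * t ^ b * (1 - t ^ 4))
      volume 0 1 := by
    have hcont : ContinuousOn (fun t => betaReg t x (1 - x) * (1 - t ^ 4)) (uIcc 0 1) :=
      (continuousOn_betaReg hx0 (by linarith)).mul (by fun_prop)
    exact ((intervalIntegrable_rpow' hb).mul_continuousOn hcont).congr fun t _ => by ring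
  rw [hsum]
  refine integral_mono_on_of_le_Ioo zero_le_one
    (by simpa only [Finset.sum_fn] using IntervalIntegrable.sum _ fun k _ => hint k)
    hupper fun t ht => ?_
  have hw : 0 ≤ t ^ b * (1 - t ^ 4) :=
    mul_nonneg (rpow_nonneg ht.1.le _) (by nlinarith [pow_le_one₀ ht.1.le ht.2.le (n := 4)])
  calc ∑ k ∈ Finset.range 4, d k * (t ^ (b + (x + k)) * (1 - t ^ 4))
      = sin (π * x) / π * (∑ k ∈ Finset.range 4, invSqrtCoeff k * (t ^ (x + k) / (x + k))) *
          (t ^ b * (1 - t ^ 4)) := by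
        simp only [d, rpow_add ht.1, Finset.mul_sum, Finset.sum_mul]
        exact Finset.sum_congr rfl fun k _ => by ring
    _ ≤ sin (π * x) / π * betaInc t x (1 - x) * (t ^ b * (1 - t ^ 4)) := by
        gcongr
        exact sum_invSqrtCoeff_le_betaInc hx0 (by linarith) ht.1.le ht.2
    _ = betaReg t x (1 - x) * t ^ b * (1 - t ^ 4) := by
        rw [betaReg_one_sub hx0 hx2]
        ring

lemma taylorLowerSum_nonneg {x b : ℝ} (hx : 0 < x) (hb : -1 ≤ b) : 0 ≤ taylorLowerSum x b :=
  Finset.sum_nonneg fun k _ => by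
    have : (0 : ℝ) ≤ k := k.cast_nonneg
    have : 0 < b + x + k + 1 := by linarith
    have : 0 < b + x + k + 5 := by linarith
    unfold invSqrtCoeff
    positivity

lemma taylorLowerSum_le_of_le {x x' b b' : ℝ} (hx : 0 < x) (hb : -1 ≤ b) (hxx' : x ≤ x')
    (hbb' : b ≤ b') : taylorLowerSum x' b' ≤ taylorLowerSum x b :=
  Finset.sum_le_sum fun k _ => by
    have : (0 : ℝ) ≤ k := k.cast_nonneg
    have : 0 < b + x + k + 1 := by linarith
    have : 0 < b' + x' + k + 1 := by linarith
    have : 0 < b + x + k + 5 := by linarith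
    have : 0 < b' + x' + k + 5 := by linarith
    unfold invSqrtCoeff
    gcongr

lemma one_sub_sq_div_two_le_sin_pi_mul (x : ℝ) :
    1 - (π * (x - 1 / 2)) ^ 2 / 2 ≤ sin (π * x) := by
  rw [← cos_sub_pi_div_two, show π * x - π / 2 = π * (x - 1 / 2) by ring]
  exact one_sub_sq_div_two_le_cos

lemma one_div_eight_lt_sin_mul_taylorLowerSum_of_mem_Icc {p p₁ p₂ : ℝ}
    (hp : p ∈ Icc p₁ p₂) (h₁ : 4 ≤ p₁) (h₂ : p₂ ≤ 6)
    (hnum : 3.141593 / 8 ≤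
      (1 - (3.141593 * (3 / p₁ - 1 / 2)) ^ 2 / 2) * taylorLowerSum (3 / p₁) (2 * p₂ - 9)) :
    1 / 8 < sin (π * (3 / p)) / π * taylorLowerSum (3 / p) (2 * p - 9) := by
  have hp0 : 0 < p := by linarith [hp.1]
  have hx : 1 / 2 ≤ 3 / p := by rw [le_div_iff₀ hp0]; linarith [hp.2]
  have hx₁ : 3 / p ≤ 3 / p₁ := div_le_div_of_nonneg_left (by norm_num) (by linarith) hp.1
  have hx₁' : 3 / p₁ ≤ 3 / 4 := div_le_div_of_nonneg_left (by norm_num) (by norm_num) h₁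
  have hL := taylorLowerSum_le_of_le (by linarith) (by linarith [hp.1]) hx₁
    (by linarith [hp.2] : 2 * p - 9 ≤ 2 * p₂ - 9)
  have hL₀ := taylorLowerSum_nonneg (x := 3 / p₁) (b := 2 * p₂ - 9) (by linarith)
    (by linarith [hp.1, hp.2])
  have hsin : 1 - (3.141593 * (3 / p₁ - 1 / 2)) ^ 2 / 2 ≤ sin (π * (3 / p)) := by
    have h : π * (3 / p - 1 / 2) ≤ 3.141593 * (3 / p₁ - 1 / 2) :=
      mul_le_mul pi_lt_d6.le (by linarith) (by linarith) (by norm_num)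
    have h₀ : 0 ≤ π * (3 / p - 1 / 2) := mul_nonneg pi_pos.le (by linarith)
    nlinarith [one_sub_sq_div_two_le_sin_pi_mul (3 / p)]
  have hsin₀ : 0 ≤ sin (π * (3 / p)) :=
    sin_nonneg_of_nonneg_of_le_pi (by positivity) (by nlinarith [pi_pos])
  rw [div_mul_eq_mul_div, lt_div_iff₀ pi_pos]
  calc 1 / 8 * π < 3.141593 / 8 := by linarith [pi_lt_d6]
    _ ≤ _ := hnum
    _ ≤ sin (π * (3 / p)) * taylorLowerSum (3 / p₁) (2 * p₂ - 9) := by gcongr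
    _ ≤ sin (π * (3 / p)) * taylorLowerSum (3 / p) (2 * p - 9) := by gcongr

lemma one_div_eight_lt_sin_mul_taylorLowerSum {p : ℝ} (hp₁ : 4 < p) (hp₂ : p ≤ 5.1) :
    1 / 8 < sin (π * (3 / p)) / π * taylorLowerSum (3 / p) (2 * p - 9) := by
  have hcases :
      p ∈ Icc 4 4.56 ∨ p ∈ Icc 4.56 4.9 ∨ p ∈ Icc 4.9 5.05 ∨ p ∈ Icc 5.05 5.1 := by
    simp only [mem_Icc]
    grind
  rcases hcases with hp | hp | hp | hp <;>
  refine one_div_eight_lt_sin_mul_taylorLowerSum_of_mem_Icc hp (by norm_num) (by norm_num) ?_ <;>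
  norm_num [taylorLowerSum, Finset.sum_range_succ, invSqrtCoeff, Nat.centralBinom, Nat.choose]

theorem condC_fails_alpha_one (p : ℝ) (hp1 : 4 < p) (hp2 : p ≤ 5.1) :
    (∫ t in (0:ℝ)..1, betaReg t (3 / p) (1 - 3 / p) * t ^ (2 * p - 9) * (1 - t ^ 4))
      - 1 / 8 > 0 := by
  have hp0 : 0 < p := by linarith
  have hx₁ : 1 / 2 ≤ 3 / p := by rw [le_div_iff₀ hp0]; linarith
  have hx₂ : 3 / p < 1 := by rw [div_lt_one hp0]; linarith
  have hb : -1 < 2 * p - 9 := by linarith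
  have hlower := sin_div_pi_mul_taylorLowerSum_le_integral hx₁ hx₂ hb
  linarith [one_div_eight_lt_sin_mul_taylorLowerSum hp1 hp2]
end
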